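/- Let ω ∈ ℝ^d \ ℚ^d. Let M be a nonempty closed (under pointwise convergence), strictly ordered, shift-invariant set of configurations all having rotation vector ω, and suppose M is minimal with these properties (an Aubry–Mather set). If M is not connected, then M is a Cantor set: it is closed, perfect, and totally disconnected. -/
import Mathlib


open scoped BigOperators

/-- The shift operator `(τ_{k,l} x)_i = x_{i+k} + l`. -/
def tau {d : ℕ} (k : Fin d → ℤ) (l : ℤ) (x : (Fin d → ℤ) → ℝ) : (Fin d → ℤ) → ℝ :=
  fun i => x (i + k) + l

/-- A configuration is Birkhoff if every integer shift is pointwise comparable to it. -/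
def IsBirkhoff {d : ℕ} (x : (Fin d → ℤ) → ℝ) : Prop :=
  ∀ (k : Fin d → ℤ) (l : ℤ), tau k l x ≤ x ∨ x ≤ tau k l x

/-- `x` has rotation vector `ω` : `lim_{n→∞} x_{ni}/n = ⟨ω,i⟩` for all `i`. -/
def HasRotVec {d : ℕ} (x : (Fin d → ℤ) → ℝ) (ω : Fin d → ℝ) : Prop :=
  ∀ i : Fin d → ℤ, Filter.Tendsto (fun n : ℕ => x ((n : ℤ) • i) / n) Filter.atTop
    (nhds (∑ k, ω k * (i k : ℝ)))


/-- A set of configurations is strictly ordered if any two of its elements are equal or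
strictly comparable at every site. -/
def StrictlyOrdered {d : ℕ} (M : Set ((Fin d → ℤ) → ℝ)) : Prop :=
  ∀ x ∈ M, ∀ y ∈ M, x = y ∨ (∀ i, x i < y i) ∨ (∀ i, y i < x i)

/-- A set of configurations is shift-invariant if it is stable under all shift operators. -/
def ShiftInvariant {d : ℕ} (M : Set ((Fin d → ℤ) → ℝ)) : Prop :=
  ∀ x ∈ M, ∀ (k : Fin d → ℤ) (l : ℤ), tau k l x ∈ M

section Aux
variable {d : ℕ}

lemma tau_tau (k k' : Fin d → ℤ) (l l' : ℤ) (x : (Fin d → ℤ) → ℝ) :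
    tau k l (tau k' l' x) = tau (k' + k) (l' + l) x := by
  funext i
  show x (i + k + k') + l' + l = x (i + (k' + k)) + ((l' + l : ℤ) : ℝ)
  rw [show i + k + k' = i + (k' + k) by abel]
  push_cast; ring

lemma tau_zero (x : (Fin d → ℤ) → ℝ) : tau 0 0 x = x := by
  funext i
  show x (i + 0) + ((0 : ℤ) : ℝ) = x i
  simp

lemma continuous_tau (k : Fin d → ℤ) (l : ℤ) : Continuous (tau (d := d) k l) :=
  continuous_pi fun i => ((continuous_apply (i + k)).add continuous_const)

lemma tau_inj (k : Fin d → ℤ) (l : ℤ) : Function.Injective (tau (d := d) k l) := by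
  intro a b h
  have h2 := congrArg (tau (-k) (-l)) h
  rwa [tau_tau, tau_tau, add_neg_cancel, add_neg_cancel, tau_zero, tau_zero] at h2

variable {M : Set ((Fin d → ℤ) → ℝ)} {u v : (Fin d → ℤ) → ℝ}

lemma ord_le (hord : StrictlyOrdered M) (hu : u ∈ M) (hv : v ∈ M) (h : u 0 ≤ v 0) :
    ∀ i, u i ≤ v i := by
  rcases hord u hu v hv with rfl | h1 | h1
  · exact fun i => le_refl _
  · exact fun i => (h1 i).le
  · exact absurd h (not_le.2 (h1 0))

lemma ord_lt (hord : StrictlyOrdered M) (hu : u ∈ M) (hv : v ∈ M) (h : u 0 < v 0) :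
    ∀ i, u i < v i := by
  rcases hord u hu v hv with rfl | h1 | h1
  · exact absurd h (lt_irrefl _)
  · exact h1
  · exact absurd h (not_lt.2 (h1 0).le)

lemma ord_eq (hord : StrictlyOrdered M) (hu : u ∈ M) (hv : v ∈ M) (h : u 0 = v 0) :
    u = v := by
  rcases hord u hu v hv with rfl | h1 | h1
  · rfl
  · exact absurd h (h1 0).ne
  · exact absurd h.symm (h1 0).ne

lemma rot_nonneg {x : (Fin d → ℤ) → ℝ} {ω : Fin d → ℝ} (hx : HasRotVec x ω)
    {k : Fin d → ℤ} {l : ℤ} (h : ∀ i, x i ≤ x (i + k) + (l : ℝ)) :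
    0 ≤ (∑ t, ω t * (k t : ℝ)) + l := by
  have key : ∀ n : ℕ, x 0 - n * l ≤ x ((n : ℤ) • k) := by
    intro n; induction n with
    | zero => simp
    | succ n ih =>
      have h2 := h ((n : ℤ) • k)
      have e : ((n + 1 : ℕ) : ℤ) • k = (n : ℤ) • k + k := by
        push_cast
        rw [add_smul, one_smul]
      rw [e]
      push_cast
      push_cast at ih
      linarith
  have h1 : Filter.Tendsto (fun n : ℕ => x 0 / n - l) Filter.atTop (nhds (0 - l)) :=
    (tendsto_const_div_atTop_nhds_zero_nat (x 0)).sub tendsto_const_nhds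
  have h2 := hx k
  have h3 : ∀ᶠ n : ℕ in Filter.atTop, x 0 / n - l ≤ x ((n : ℤ) • k) / n := by
    filter_upwards [Filter.eventually_ge_atTop 1] with n hn
    have hn' : (0 : ℝ) < n := by
      have : (1 : ℝ) ≤ n := by exact_mod_cast hn
      linarith
    have e : x 0 / n - l = (x 0 - n * l) / n := by field_simp
    rw [e]
    have := key n
    gcongr
  have := le_of_tendsto_of_tendsto h1 h2 h3
  linarith

end Aux

section Aux2
variable {d : ℕ} {M : Set ((Fin d → ℤ) → ℝ)} {ω : Fin d → ℝ}

lemma lt_tau (hord : StrictlyOrdered M) (hshift : ShiftInvariant M)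
    (hrot : ∀ x ∈ M, HasRotVec x ω) {x : (Fin d → ℤ) → ℝ} (hx : x ∈ M)
    {k : Fin d → ℤ} {l : ℤ} (h : 0 < (∑ t, ω t * (k t : ℝ)) + l) :
    ∀ i, x i < tau k l x i := by
  have hx' := hrot x hx
  have hsum : (∑ t, ω t * ((-k) t : ℝ)) = -∑ t, ω t * (k t : ℝ) := by
    rw [← Finset.sum_neg_distrib]
    refine Finset.sum_congr rfl fun t _ => ?_
    simp [mul_neg]
  rcases hord x hx (tau k l x) (hshift x hx k l) with he | h1 | h1
  · exfalso
    have h3 : ∀ i, x i ≤ x (i + -k) + ((-l : ℤ) : ℝ) := by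
      intro i
      have h4 := congrFun he (i + -k)
      have e : tau k l x (i + -k) = x i + l := by
        show x (i + -k + k) + (l : ℝ) = x i + l
        rw [show i + -k + k = i by abel]
      rw [e] at h4
      push_cast
      linarith [h4.symm.le]
    have h5 := rot_nonneg hx' h3
    rw [hsum] at h5
    push_cast at h5
    linarith
  · exact h1
  · exfalso
    have h3 : ∀ i, x i ≤ x (i + -k) + ((-l : ℤ) : ℝ) := by
      intro i
      have h4 := h1 (i + -k)
      have e : tau k l x (i + -k) = x i + l := by
        show x (i + -k + k) + (l : ℝ) = x i + l
        rw [show i + -k + k = i by abel]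
      rw [e] at h4
      push_cast
      linarith
    have h5 := rot_nonneg hx' h3
    rw [hsum] at h5
    push_cast at h5
    linarith

lemma tau_lt_tau (hord : StrictlyOrdered M) (hshift : ShiftInvariant M)
    (hrot : ∀ x ∈ M, HasRotVec x ω) {x : (Fin d → ℤ) → ℝ} (hx : x ∈ M)
    {k k' : Fin d → ℤ} {l l' : ℤ}
    (h : (∑ t, ω t * (k t : ℝ)) + l < (∑ t, ω t * (k' t : ℝ)) + l') :
    ∀ i, tau k l x i < tau k' l' x i := by
  have hu : tau k l x ∈ M := hshift x hx k l
  have hsum : (∑ t, ω t * ((k' - k) t : ℝ)) =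
      (∑ t, ω t * (k' t : ℝ)) - ∑ t, ω t * (k t : ℝ) := by
    rw [← Finset.sum_sub_distrib]
    refine Finset.sum_congr rfl fun t _ => ?_
    have : ((k' - k) t : ℝ) = (k' t : ℝ) - (k t : ℝ) := by simp [Pi.sub_apply]
    rw [this]; ring
  have h2 : 0 < (∑ t, ω t * ((k' - k) t : ℝ)) + ((l' - l : ℤ) : ℝ) := by
    rw [hsum]; push_cast; linarith
  have h3 := lt_tau hord hshift hrot hu h2
  have e : tau (k' - k) (l' - l) (tau k l x) = tau k' l' x := by
    rw [tau_tau, show k + (k' - k) = k' from by abel, show l + (l' - l) = l' from by omega]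
  intro i
  have h4 := h3 i
  rwa [e] at h4

end Aux2

section Chain
variable {d : ℕ} {M : Set ((Fin d → ℤ) → ℝ)}

lemma chain_max (hord : StrictlyOrdered M) {C : Set ((Fin d → ℤ) → ℝ)}
    (hCM : C ⊆ M) (hC : IsClosed C) (hne : C.Nonempty) {b : (Fin d → ℤ) → ℝ}
    (hbM : b ∈ M) (hub : ∀ w ∈ C, w 0 ≤ b 0) :
    ∃ p ∈ C, ∀ w ∈ C, w 0 ≤ p 0 := by
  by_cases hmax : ∃ p ∈ C, ∀ w ∈ C, w 0 ≤ p 0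
  · exact hmax
  exfalso
  push_neg at hmax
  have hle : ∀ w ∈ C, ∀ i, w i ≤ b i := fun w hw => ord_le hord (hCM hw) hbM (hub w hw)
  have hbdd : ∀ i, BddAbove ((fun w => w i) '' C) := fun i =>
    ⟨b i, by rintro _ ⟨w, hw, rfl⟩; exact hle w hw i⟩
  have hneim : ∀ i, ((fun w => w i) '' C).Nonempty := fun i => hne.image _
  set p : (Fin d → ℤ) → ℝ := fun i => sSup ((fun w => w i) '' C) with hp
  have hws : ∀ w ∈ C, w 0 ≤ p 0 := fun w hw => le_csSup (hbdd 0) ⟨w, hw, rfl⟩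
  have hwlt : ∀ w ∈ C, w 0 < p 0 := by
    intro w hw
    obtain ⟨w', hw', hlt⟩ := hmax w hw
    exact lt_of_lt_of_le hlt (hws w' hw')
  have hsel : ∀ n : ℕ, ∃ w ∈ C, p 0 - 1 / (n + 1) < w 0 := by
    intro n
    have hlt : p 0 - 1 / ((n : ℝ) + 1) < p 0 := by
      have : (0 : ℝ) < 1 / ((n : ℝ) + 1) := by positivity
      linarith
    obtain ⟨r, ⟨w, hw, rfl⟩, hr⟩ := exists_lt_of_lt_csSup (hneim 0) hlt
    exact ⟨w, hw, hr⟩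
  choose w hwC hw0 using hsel
  have htend : ∀ i, Filter.Tendsto (fun n => w n i) Filter.atTop (nhds (p i)) := by
    intro i
    refine tendsto_order.2 ⟨?_, ?_⟩
    · intro a ha
      obtain ⟨r, ⟨w', hw', rfl⟩, har⟩ := exists_lt_of_lt_csSup (hneim i) ha
      have h1 : 0 < p 0 - w' 0 := sub_pos.2 (hwlt w' hw')
      have h2 : ∀ᶠ n : ℕ in Filter.atTop, 1 / ((n : ℝ) + 1) < p 0 - w' 0 :=
        tendsto_one_div_add_atTop_nhds_zero_nat.eventually (gt_mem_nhds h1)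
      filter_upwards [h2] with n hn
      have h3 : w' 0 < w n 0 := by have := hw0 n; linarith
      exact lt_of_lt_of_le har (ord_le hord (hCM hw') (hCM (hwC n)) h3.le i)
    · intro a ha
      exact Filter.Eventually.of_forall fun n =>
        lt_of_le_of_lt (le_csSup (hbdd i) ⟨w n, hwC n, rfl⟩) ha
  have hpC : p ∈ C := hC.mem_of_tendsto (tendsto_pi_nhds.2 htend)
    (Filter.Eventually.of_forall hwC)
  obtain ⟨w', hw', hgt⟩ := hmax p hpC
  exact absurd (hws w' hw') (not_le.2 hgt)

lemma chain_min (hord : StrictlyOrdered M) {C : Set ((Fin d → ℤ) → ℝ)}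
    (hCM : C ⊆ M) (hC : IsClosed C) (hne : C.Nonempty) {b : (Fin d → ℤ) → ℝ}
    (hbM : b ∈ M) (hlb : ∀ w ∈ C, b 0 ≤ w 0) :
    ∃ p ∈ C, ∀ w ∈ C, p 0 ≤ w 0 := by
  by_cases hmin : ∃ p ∈ C, ∀ w ∈ C, p 0 ≤ w 0
  · exact hmin
  exfalso
  push_neg at hmin
  have hle : ∀ w ∈ C, ∀ i, b i ≤ w i := fun w hw => ord_le hord hbM (hCM hw) (hlb w hw)
  have hbdd : ∀ i, BddBelow ((fun w => w i) '' C) := fun i =>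
    ⟨b i, by rintro _ ⟨w, hw, rfl⟩; exact hle w hw i⟩
  have hneim : ∀ i, ((fun w => w i) '' C).Nonempty := fun i => hne.image _
  set p : (Fin d → ℤ) → ℝ := fun i => sInf ((fun w => w i) '' C) with hp
  have hws : ∀ w ∈ C, p 0 ≤ w 0 := fun w hw => csInf_le (hbdd 0) ⟨w, hw, rfl⟩
  have hwlt : ∀ w ∈ C, p 0 < w 0 := by
    intro w hw
    obtain ⟨w', hw', hlt⟩ := hmin w hw
    exact lt_of_le_of_lt (hws w' hw') hlt
  have hsel : ∀ n : ℕ, ∃ w ∈ C, w 0 < p 0 + 1 / (n + 1) := by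
    intro n
    have hlt : p 0 < p 0 + 1 / ((n : ℝ) + 1) := by
      have : (0 : ℝ) < 1 / ((n : ℝ) + 1) := by positivity
      linarith
    obtain ⟨r, ⟨w, hw, rfl⟩, hr⟩ := exists_lt_of_csInf_lt (hneim 0) hlt
    exact ⟨w, hw, hr⟩
  choose w hwC hw0 using hsel
  have htend : ∀ i, Filter.Tendsto (fun n => w n i) Filter.atTop (nhds (p i)) := by
    intro i
    refine tendsto_order.2 ⟨?_, ?_⟩
    · intro a ha
      exact Filter.Eventually.of_forall fun n =>
        lt_of_lt_of_le ha (csInf_le (hbdd i) ⟨w n, hwC n, rfl⟩)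
    · intro a ha
      obtain ⟨r, ⟨w', hw', rfl⟩, har⟩ := exists_lt_of_csInf_lt (hneim i) ha
      have h1 : 0 < w' 0 - p 0 := sub_pos.2 (hwlt w' hw')
      have h2 : ∀ᶠ n : ℕ in Filter.atTop, 1 / ((n : ℝ) + 1) < w' 0 - p 0 :=
        tendsto_one_div_add_atTop_nhds_zero_nat.eventually (gt_mem_nhds h1)
      filter_upwards [h2] with n hn
      have h3 : w n 0 < w' 0 := by have := hw0 n; linarith
      exact lt_of_le_of_lt (ord_le hord (hCM (hwC n)) (hCM hw') h3.le i) har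
  have hpC : p ∈ C := hC.mem_of_tendsto (tendsto_pi_nhds.2 htend)
    (Filter.Eventually.of_forall hwC)
  obtain ⟨w', hw', hgt⟩ := hmin p hpC
  exact absurd (hws w' hw') (not_le.2 hgt)

end Chain

section Gap
variable {d : ℕ} {M : Set ((Fin d → ℤ) → ℝ)}

lemma exists_gap (hord : StrictlyOrdered M) {A B : Set ((Fin d → ℤ) → ℝ)}
    (hA : IsClosed A) (hB : IsClosed B) (hABM : A ∪ B = M) (hd : A ∩ B = ∅)
    {a b : (Fin d → ℤ) → ℝ} (ha : a ∈ A) (hb : b ∈ B) (hab : a 0 < b 0) :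
    ∃ p ∈ M, ∃ q ∈ M, p 0 < q 0 ∧ ∀ w ∈ M, ¬(p 0 < w 0 ∧ w 0 < q 0) := by
  have hAM : A ⊆ M := hABM ▸ Set.subset_union_left
  have hBM : B ⊆ M := hABM ▸ Set.subset_union_right
  have hdisj : ∀ w, w ∈ A → w ∈ B → False := fun w h1 h2 =>
    Set.eq_empty_iff_forall_notMem.1 hd w ⟨h1, h2⟩
  set C : Set ((Fin d → ℤ) → ℝ) := {w | w ∈ A ∧ w 0 ≤ b 0} with hC
  have hCcl : IsClosed C := hA.inter (isClosed_le (continuous_apply 0) continuous_const)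
  obtain ⟨p, hpC, hpmax⟩ := chain_max hord (fun w hw => hAM hw.1) hCcl
    ⟨a, ha, hab.le⟩ (hBM hb) (fun w hw => hw.2)
  have hpM : (p ∈ M) := hAM hpC.1
  have hpb : p 0 < b 0 := lt_of_le_of_ne hpC.2 fun he =>
    hdisj p hpC.1 (ord_eq hord hpM (hBM hb) he ▸ hb)
  set C' : Set ((Fin d → ℤ) → ℝ) := {w | w ∈ B ∧ p 0 ≤ w 0} with hC'
  have hC'cl : IsClosed C' := hB.inter (isClosed_le continuous_const (continuous_apply 0))
  obtain ⟨q, hqC', hqmin⟩ := chain_min hord (fun w hw => hBM hw.1) hC'cl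
    ⟨b, hb, hpb.le⟩ hpM (fun w hw => hw.2)
  have hqM : q ∈ M := hBM hqC'.1
  have hpq : p 0 < q 0 := lt_of_le_of_ne hqC'.2 fun he =>
    hdisj p hpC.1 (by rw [ord_eq hord hpM hqM he]; exact hqC'.1)
  refine ⟨p, hpM, q, hqM, hpq, ?_⟩
  rintro w hwM ⟨h1, h2⟩
  have hwAB : w ∈ A ∪ B := hABM.symm ▸ hwM
  rcases hwAB with hwA | hwB
  · have hqb : q 0 ≤ b 0 := hqmin b ⟨hb, hpb.le⟩
    exact absurd (hpmax w ⟨hwA, (h2.trans_le hqb).le⟩) (not_le.2 h1)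
  · exact absurd (hqmin w ⟨hwB, h1.le⟩) (not_le.2 h2)

end Gap

section Acc
variable {d : ℕ} {M : Set ((Fin d → ℤ) → ℝ)} {ω : Fin d → ℝ}

lemma exists_acc (hirr : ¬ ∀ k, ∃ q : ℚ, ω k = (q : ℝ)) (hne : M.Nonempty)
    (hcl : IsClosed M) (hord : StrictlyOrdered M) (hshift : ShiftInvariant M)
    (hrot : ∀ x ∈ M, HasRotVec x ω) :
    ∃ z ∈ M, z ∈ closure (M \ {z}) := by
  push_neg at hirr
  obtain ⟨j, hj⟩ := hirr
  obtain ⟨x₀, hx₀⟩ := hne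
  set G := AddSubgroup.closure ({ω j, 1} : Set ℝ) with hG
  have hGdense : Dense (G : Set ℝ) := by
    rcases G.dense_or_cyclic with hdense | ⟨c, hc⟩
    · exact hdense
    · exfalso
      have h1 : (1 : ℝ) ∈ G := AddSubgroup.subset_closure (by simp)
      have hω : ω j ∈ G := AddSubgroup.subset_closure (by simp)
      rw [hc, AddSubgroup.mem_closure_singleton] at h1 hω
      obtain ⟨n, hn⟩ := h1
      obtain ⟨m, hm⟩ := hω
      have hn0 : (n : ℝ) ≠ 0 := by
        rintro h0
        rw [zsmul_eq_mul, h0, zero_mul] at hn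
        exact one_ne_zero hn.symm
      refine hj ((m : ℚ) / n) ?_
      rw [zsmul_eq_mul] at hn hm
      push_cast
      rw [eq_div_iff hn0, ← hm]
      linear_combination (m : ℝ) * hn
  -- an increasing sequence in G ∩ (0,1)
  have hseq : ∀ n : ℕ, ∃ g ∈ G, g ∈ Set.Ioo (1 - 1 / ((n : ℝ) + 1)) (1 - 1 / ((n : ℝ) + 2)) := by
    intro n
    have hlt : 1 / ((n : ℝ) + 2) < 1 / ((n : ℝ) + 1) := by
      apply one_div_lt_one_div_of_lt <;> linarith [Nat.cast_nonneg (α := ℝ) n]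
    have hnonempty : (Set.Ioo (1 - 1 / ((n : ℝ) + 1)) (1 - 1 / ((n : ℝ) + 2))).Nonempty := by
      rw [Set.nonempty_Ioo]; linarith
    obtain ⟨g, hgG, hgI⟩ := hGdense.exists_mem_open isOpen_Ioo hnonempty
    exact ⟨g, hgG, hgI⟩
  choose g hgG hgI using hseq
  have hg01 : ∀ n, g n ∈ Set.Ioo (0 : ℝ) 1 := by
    intro n
    obtain ⟨h1, h2⟩ := hgI n
    have hp1 : (0:ℝ) < 1 / ((n : ℝ) + 2) := by positivity
    have hp2 : 1 / ((n : ℝ) + 1) ≤ 1 := by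
      rw [div_le_one (by positivity)]; linarith [Nat.cast_nonneg (α := ℝ) n]
    constructor <;> linarith
  have hgmono : ∀ n, g n < g (n + 1) := by
    intro n
    have h1 := (hgI n).2
    have h2 := (hgI (n + 1)).1
    push_cast at h1 h2
    rw [show ((n : ℝ) + 1 + 1) = (n : ℝ) + 2 by ring] at h2
    linarith
  have hrep : ∀ n, ∃ m l : ℤ, (m : ℝ) * ω j + l = g n := by
    intro n
    have := hgG n
    rw [hG, AddSubgroup.mem_closure_pair] at this
    obtain ⟨m, l, h⟩ := this
    refine ⟨m, l, ?_⟩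
    rw [zsmul_eq_mul, zsmul_eq_mul, mul_one] at h
    exact h
  choose m l hml using hrep
  -- the configurations
  set y : ℕ → (Fin d → ℤ) → ℝ := fun n => tau (Pi.single j (m n)) (l n) x₀ with hy
  have hval : ∀ n, (∑ t, ω t * ((Pi.single j (m n) : Fin d → ℤ) t : ℝ)) + (l n : ℝ) = g n := by
    intro n
    have hs : (∑ t, ω t * ((Pi.single j (m n) : Fin d → ℤ) t : ℝ)) = ω j * (m n : ℝ) := by
      rw [Finset.sum_eq_single j]
      · rw [Pi.single_eq_same]
      · intro t _ ht
        rw [Pi.single_eq_of_ne ht]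
        simp
      · intro h; exact absurd (Finset.mem_univ j) h
    rw [hs, mul_comm]
    exact hml n
  have hmono : ∀ n, ∀ i, y n i < y (n + 1) i := by
    intro n
    apply tau_lt_tau hord hshift hrot hx₀
    rw [hval n, hval (n + 1)]
    exact hgmono n
  have hbound : ∀ n, ∀ i, y n i < x₀ i + 1 := by
    intro n i
    have h := tau_lt_tau hord hshift hrot hx₀ (k := Pi.single j (m n)) (k' := 0)
      (l := l n) (l' := 1) (by
        rw [hval n]
        simp only [Pi.zero_apply, Int.cast_zero, mul_zero, Finset.sum_const_zero, zero_add,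
          Int.cast_one]
        exact (hg01 n).2) i
    have e : tau 0 1 x₀ i = x₀ i + 1 := by
      show x₀ (i + 0) + ((1 : ℤ) : ℝ) = x₀ i + 1
      simp
    rwa [e] at h
  have hmono' : ∀ i, Monotone fun n => y n i := fun i =>
    monotone_nat_of_le_succ fun n => (hmono n i).le
  have hbdd : ∀ i, BddAbove (Set.range fun n => y n i) := fun i =>
    ⟨x₀ i + 1, by rintro _ ⟨n, rfl⟩; exact (hbound n i).le⟩
  set z : (Fin d → ℤ) → ℝ := fun i => ⨆ n, y n i with hz
  have htend : ∀ i, Filter.Tendsto (fun n => y n i) Filter.atTop (nhds (z i)) := fun i =>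
    tendsto_atTop_ciSup (hmono' i) (hbdd i)
  have hyM : ∀ n, y n ∈ M := fun n => hshift x₀ hx₀ _ _
  have hzM : z ∈ M := hcl.mem_of_tendsto (tendsto_pi_nhds.2 htend)
    (Filter.Eventually.of_forall hyM)
  have hzy : ∀ n, y n ≠ z := by
    intro n he
    have h1 : y n 0 < y (n + 1) 0 := hmono n 0
    have h2 : y (n + 1) 0 ≤ z 0 := le_ciSup (hbdd 0) (n + 1)
    rw [he] at h1
    linarith
  refine ⟨z, hzM, ?_⟩
  exact mem_closure_of_tendsto (tendsto_pi_nhds.2 htend)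
    (Filter.Eventually.of_forall fun n => ⟨hyM n, by simp [hzy n]⟩)

end Acc

theorem stmt11 {d : ℕ} (ω : Fin d → ℝ) (hirr : ¬ ∀ k, ∃ q : ℚ, ω k = (q : ℝ))
    (M : Set ((Fin d → ℤ) → ℝ)) (hne : M.Nonempty) (hcl : IsClosed M)
    (hord : StrictlyOrdered M) (hshift : ShiftInvariant M)
    (hrot : ∀ x ∈ M, HasRotVec x ω)
    (hmin : ∀ M' ⊆ M, M'.Nonempty → IsClosed M' → StrictlyOrdered M' → ShiftInvariant M' →
      (∀ x ∈ M', HasRotVec x ω) → M' = M)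
    (hnc : ¬ IsConnected M) :
    IsClosed M ∧ (∀ x ∈ M, x ∈ closure (M \ {x})) ∧
      ∀ x ∈ M, ∀ y ∈ M, x ≠ y → ∃ C₁ C₂ : Set ((Fin d → ℤ) → ℝ),
        IsClosed C₁ ∧ IsClosed C₂ ∧ C₁ ∪ C₂ = M ∧ C₁ ∩ C₂ = ∅ ∧ x ∈ C₁ ∧ y ∈ C₂ := by
  classical
  -- Perfectness via minimality and an accumulation point
  have hperf : ∀ x ∈ M, x ∈ closure (M \ {x}) := by
    obtain ⟨z, hzM, hz⟩ := exists_acc hirr hne hcl hord hshift hrot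
    set M' := {x | x ∈ M ∧ x ∈ closure (M \ {x})} with hM'
    have hsub : M' ⊆ M := fun x hx => hx.1
    have hM'cl : IsClosed M' := by
      rw [← isOpen_compl_iff, isOpen_iff_mem_nhds]
      intro x hx
      by_cases hxM : x ∈ M
      · have hxc : x ∉ closure (M \ {x}) := fun h => hx ⟨hxM, h⟩
        have hU : (closure (M \ {x}))ᶜ ∈ nhds x :=
          isClosed_closure.isOpen_compl.mem_nhds hxc
        refine Filter.mem_of_superset hU ?_
        intro y hy hyM'
        by_cases hyx : y = x
        · exact hx (hyx ▸ hyM')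
        · exact hy (subset_closure ⟨hyM'.1, hyx⟩)
      · exact Filter.mem_of_superset (hcl.isOpen_compl.mem_nhds hxM)
          fun y hy hyM' => hy hyM'.1
    have hM'shift : ShiftInvariant M' := by
      intro x hx k l
      refine ⟨hshift x hx.1 k l, ?_⟩
      have h1 : tau k l x ∈ tau k l '' closure (M \ {x}) := ⟨x, hx.2, rfl⟩
      have h2 := image_closure_subset_closure_image (continuous_tau k l) h1
      refine closure_mono ?_ h2
      rintro _ ⟨w, ⟨hwM, hwx⟩, rfl⟩
      refine ⟨hshift w hwM k l, fun he => hwx ?_⟩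
      rw [Set.mem_singleton_iff] at he ⊢
      exact tau_inj k l he
    have heq := hmin M' hsub ⟨z, hzM, hz⟩ hM'cl
      (fun x hx y hy => hord x (hsub hx) y (hsub hy)) hM'shift
      (fun x hx => hrot x (hsub hx))
    intro x hx
    rw [← heq] at hx
    exact hx.2
  -- Orbit density via minimality
  have horb : ∀ p ∈ M, closure {w | ∃ k l, w = tau k l p} = M := by
    intro p hp
    have hsub : {w | ∃ k l, w = tau k l p} ⊆ M := by
      rintro w ⟨k, l, rfl⟩; exact hshift p hp k l
    have hsub' : closure {w | ∃ k l, w = tau k l p} ⊆ M :=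
      hcl.closure_subset_iff.2 hsub
    refine hmin _ hsub' ⟨p, subset_closure ⟨0, 0, (tau_zero p).symm⟩⟩ isClosed_closure
      (fun x hx y hy => hord x (hsub' hx) y (hsub' hy)) ?_
      (fun x hx => hrot x (hsub' hx))
    intro x hx k l
    have h2 := image_closure_subset_closure_image (continuous_tau k l) ⟨x, hx, rfl⟩
    refine closure_mono ?_ h2
    rintro _ ⟨w, ⟨k', l', rfl⟩, rfl⟩
    exact ⟨k' + k, l' + l, tau_tau k k' l l' p⟩
  -- Separation into two closed pieces
  have hnp : ¬ IsPreconnected M := fun h => hnc ⟨hne, h⟩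
  rw [IsPreconnected] at hnp
  push_neg at hnp
  obtain ⟨u, v, hu, hv, huv, hMu, hMv, hempty⟩ := hnp
  set A : Set ((Fin d → ℤ) → ℝ) := M ∩ vᶜ with hA
  set B : Set ((Fin d → ℤ) → ℝ) := M ∩ uᶜ with hB
  have hAcl : IsClosed A := hcl.inter (isClosed_compl_iff.2 hv)
  have hBcl : IsClosed B := hcl.inter (isClosed_compl_iff.2 hu)
  have hnotboth : ∀ w ∈ M, ¬(w ∈ u ∧ w ∈ v) := fun w hw hwc =>
    Set.eq_empty_iff_forall_notMem.1 hempty w ⟨hw, hwc.1, hwc.2⟩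
  have hABM : A ∪ B = M := by
    apply Set.Subset.antisymm
    · rintro w (⟨h1, _⟩ | ⟨h1, _⟩) <;> exact h1
    · intro w hw
      rcases huv hw with h1 | h1
      · exact Or.inl ⟨hw, fun h2 => hnotboth w hw ⟨h1, h2⟩⟩
      · exact Or.inr ⟨hw, fun h2 => hnotboth w hw ⟨h2, h1⟩⟩
  have hABe : A ∩ B = ∅ := by
    rw [Set.eq_empty_iff_forall_notMem]
    rintro w ⟨⟨hwM, hwv⟩, _, hwu⟩
    rcases huv hwM with h1 | h1
    · exact hwu h1
    · exact hwv h1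
  obtain ⟨a, haM, hau⟩ := hMu
  obtain ⟨b, hbM, hbv⟩ := hMv
  have haA : a ∈ A := ⟨haM, fun h2 => hnotboth a haM ⟨hau, h2⟩⟩
  have hbB : b ∈ B := ⟨hbM, fun h2 => hnotboth b hbM ⟨h2, hbv⟩⟩
  have hab : a ≠ b := fun he =>
    Set.eq_empty_iff_forall_notMem.1 hABe a ⟨haA, he ▸ hbB⟩
  have hab0 : a 0 ≠ b 0 := fun he => hab (ord_eq hord haM hbM he)
  -- a gap in M
  have hPQ : ∃ p ∈ M, ∃ q ∈ M, p 0 < q 0 ∧ ∀ w ∈ M, ¬(p 0 < w 0 ∧ w 0 < q 0) := by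
    rcases hab0.lt_or_gt with h | h
    · exact exists_gap hord hAcl hBcl hABM hABe haA hbB h
    · exact exists_gap hord hBcl hAcl (Set.union_comm A B ▸ hABM)
        (Set.inter_comm A B ▸ hABe) hbB haA h
  obtain ⟨p, hpM, q, hqM, hpq, hgap⟩ := hPQ
  -- between any two points of M there is a value not attained on M at site 0
  have hgapval : ∀ x ∈ M, ∀ y ∈ M, x 0 < y 0 →
      ∃ t, x 0 < t ∧ t < y 0 ∧ ∀ w ∈ M, w 0 ≠ t := by
    intro x hx y hy hxy
    by_contra hcon
    push_neg at hcon
    obtain ⟨c, hcM, hc0⟩ := hcon ((x 0 + y 0) / 2) (by linarith) (by linarith)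
    have hco : c ∈ closure {w | ∃ k l, w = tau k l p} := (horb p hpM).symm ▸ hcM
    have hU : {w : (Fin d → ℤ) → ℝ | w 0 ∈ Set.Ioo (x 0) (y 0)} ∈ nhds c := by
      refine IsOpen.mem_nhds (isOpen_Ioo.preimage (continuous_apply 0)) ?_
      show c 0 ∈ Set.Ioo (x 0) (y 0)
      rw [hc0]
      constructor
      · show x 0 < (x 0 + y 0) / 2; linarith
      · show (x 0 + y 0) / 2 < y 0; linarith
    obtain ⟨w', hw'⟩ := mem_closure_iff_nhds.1 hco _ hU
    obtain ⟨hw'U, k, l, rfl⟩ := hw'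
    have huM : tau k l p ∈ M := hshift p hpM k l
    have hvM : tau k l q ∈ M := hshift q hqM k l
    have hpq' : ∀ i, p i < q i := ord_lt hord hpM hqM hpq
    have huv : tau k l p 0 < tau k l q 0 := by
      show p (0 + k) + (l : ℝ) < q (0 + k) + (l : ℝ)
      linarith [hpq' (0 + k)]
    have hw'1 : x 0 < tau k l p 0 := hw'U.1
    have hw'2 : tau k l p 0 < y 0 := hw'U.2
    set t := (tau k l p 0 + min (tau k l q 0) (y 0)) / 2 with ht
    have hmin' : tau k l p 0 < min (tau k l q 0) (y 0) := lt_min huv hw'2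
    have htu : tau k l p 0 < t := by rw [ht]; linarith
    have htm : t < min (tau k l q 0) (y 0) := by rw [ht]; linarith
    have ht1 : x 0 < t := hw'1.trans htu
    have ht2 : t < y 0 := htm.trans_le (min_le_right _ _)
    have htv : t < tau k l q 0 := htm.trans_le (min_le_left _ _)
    obtain ⟨w, hwM, hw0⟩ := hcon t ht1 ht2
    have h1 : ∀ i, tau k l p i < w i := ord_lt hord huM hwM (by rw [hw0]; exact htu)
    have h2 : ∀ i, w i < tau k l q i := ord_lt hord hwM hvM (by rw [hw0]; exact htv)
    have e : (0 : Fin d → ℤ) + -k + k = 0 := by abel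
    refine hgap (tau (-k) (-l) w) (hshift w hwM (-k) (-l)) ⟨?_, ?_⟩
    · have h3 := h1 (0 + -k)
      simp only [tau] at h3
      rw [e] at h3
      show p 0 < w (0 + -k) + ((-l : ℤ) : ℝ)
      push_cast
      linarith
    · have h3 := h2 (0 + -k)
      simp only [tau] at h3
      rw [e] at h3
      show w (0 + -k) + ((-l : ℤ) : ℝ) < q 0
      push_cast
      linarith
  -- Assembly
  refine ⟨hcl, hperf, ?_⟩
  intro x hx y hy hxy
  have hxy0 : x 0 ≠ y 0 := fun h => hxy (ord_eq hord hx hy h)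
  rcases hxy0.lt_or_gt with h | h
  · obtain ⟨t, ht1, ht2, ht⟩ := hgapval x hx y hy h
    refine ⟨{w | w ∈ M ∧ w 0 ≤ t}, {w | w ∈ M ∧ t ≤ w 0},
      hcl.inter (isClosed_le (continuous_apply 0) continuous_const),
      hcl.inter (isClosed_le continuous_const (continuous_apply 0)), ?_, ?_,
      ⟨hx, ht1.le⟩, ⟨hy, ht2.le⟩⟩
    · apply Set.Subset.antisymm
      · rintro w (⟨h1, _⟩ | ⟨h1, _⟩) <;> exact h1
      · intro w hw
        rcases le_total (w 0) t with h1 | h1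
        · exact Or.inl ⟨hw, h1⟩
        · exact Or.inr ⟨hw, h1⟩
    · rw [Set.eq_empty_iff_forall_notMem]
      rintro w ⟨⟨hwM, h1⟩, _, h2⟩
      exact ht w hwM (le_antisymm h1 h2)
  · obtain ⟨t, ht1, ht2, ht⟩ := hgapval y hy x hx h
    refine ⟨{w | w ∈ M ∧ t ≤ w 0}, {w | w ∈ M ∧ w 0 ≤ t},
      hcl.inter (isClosed_le continuous_const (continuous_apply 0)),
      hcl.inter (isClosed_le (continuous_apply 0) continuous_const), ?_, ?_,
      ⟨hx, ht2.le⟩, ⟨hy, ht1.le⟩⟩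
    · apply Set.Subset.antisymm
      · rintro w (⟨h1, _⟩ | ⟨h1, _⟩) <;> exact h1
      · intro w hw
        rcases le_total (w 0) t with h1 | h1
        · exact Or.inr ⟨hw, h1⟩
        · exact Or.inl ⟨hw, h1⟩
    · rw [Set.eq_empty_iff_forall_notMem]
      rintro w ⟨⟨hwM, h1⟩, _, h2⟩
      exact ht w hwM (le_antisymm h2 h1)
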